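/- arXiv:1904.03723 — 2 statements merged into one kernel-verified Lean document; each statement's English description precedes it below -/
import Mathlib

section
/- Let G be a triangle-free planar graph with at least 3 vertices, and let P be a path in G with at most 3 vertices such that V(P) ≠ V(G) and G is connected. Then there exists a vertex v ∈ V(G)\V(P) of degree at most 3 in G. -/
/-!
Suppose every vertex outside the path `P` with `ℓ ≤ 2` edges has degree at least `4`.
The degrees on `V(P)` sum to at least `2ℓ + 1`: each edge of `P` is seen from both ends,
and connectivity provides one more edge leaving `V(P)`. Hence
`2 e(G) ≥ 4 (n - ℓ - 1) + 2ℓ + 1 = 4n - 2ℓ - 3 ≥ 4n - 7 > 4n - 8`,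
contradicting `e(G) ≤ 2n - 4`.
-/

open Finset

namespace SimpleGraph

variable {V : Type*} {G : SimpleGraph V}

theorem sum_degree_eq_card_darts_fst_mem [Fintype V] [DecidableEq V] [DecidableRel G.Adj]
    (s : Finset V) : ∑ v ∈ s, G.degree v = #{d : G.Dart | d.fst ∈ s} := by
  symm
  refine (card_eq_sum_card_fiberwise (f := fun d : G.Dart => d.fst) (t := s) ?_).trans
    (sum_congr rfl fun v hv => ?_)
  · exact fun d hd => (mem_filter.mp hd).2
  · rw [← dart_fst_fiber_card_eq_degree, filter_filter]
    congr 1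
    ext d
    simp only [mem_filter, mem_univ, true_and, and_iff_right_iff_imp]
    rintro rfl
    exact hv

namespace Walk

variable {u v : V} {p : G.Walk u v}

theorem IsTrail.darts_nodup (hp : p.IsTrail) : p.darts.Nodup :=
  hp.edges_nodup.of_map _

theorem IsTrail.disjoint_darts_reverse (hp : p.IsTrail) : p.darts.Disjoint p.reverse.darts := by
  intro d hd hd'
  rw [darts_reverse, List.mem_reverse, List.mem_map] at hd'
  obtain ⟨e, he, rfl⟩ := hd'
  exact e.symm_ne (List.inj_on_of_nodup_map hp.edges_nodup hd he (Dart.edge_symm e))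

theorem IsTrail.two_mul_length_add_one_le_sum_degree [Fintype V] [DecidableEq V]
    [DecidableRel G.Adj] (hG : G.Preconnected) (hp : p.IsTrail) {w : V} (hw : w ∉ p.support) :
    2 * p.length + 1 ≤ ∑ x ∈ p.support.toFinset, G.degree x := by
  obtain ⟨d₀, -, hd₀, hd₀'⟩ :=
    (hG u w).some.exists_boundary_dart {x | x ∈ p.support} p.start_mem_support hw
  have hd₀_notMem : d₀ ∉ p.darts ++ p.reverse.darts := by
    rw [List.mem_append]
    rintro (hd | hd)
    · exact hd₀' (p.dart_snd_mem_support_of_mem_darts hd)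
    · exact hd₀' (by simpa using p.reverse.dart_snd_mem_support_of_mem_darts hd)
  have hnodup : (p.darts ++ p.reverse.darts).Nodup :=
    hp.darts_nodup.append hp.reverse.darts_nodup hp.disjoint_darts_reverse
  have hsub : insert d₀ (p.darts ++ p.reverse.darts).toFinset ⊆
      ({d : G.Dart | d.fst ∈ p.support.toFinset} : Finset G.Dart) := by
    intro d hd
    simp only [mem_insert, List.mem_toFinset, List.mem_append] at hd
    simp only [mem_filter, mem_univ, true_and, List.mem_toFinset]
    rcases hd with rfl | hd | hd
    · exact hd₀
    · exact p.dart_fst_mem_support_of_mem_darts hd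
    · simpa using p.reverse.dart_fst_mem_support_of_mem_darts hd
  calc 2 * p.length + 1 = #(insert d₀ (p.darts ++ p.reverse.darts).toFinset) := by
        rw [card_insert_of_notMem (by simpa using hd₀_notMem), List.toFinset_card_of_nodup hnodup]
        simp only [List.length_append, length_darts, length_reverse]
        ring
    _ ≤ #{d : G.Dart | d.fst ∈ p.support.toFinset} := card_le_card hsub
    _ = ∑ x ∈ p.support.toFinset, G.degree x := (sum_degree_eq_card_darts_fst_mem _).symm

end Walk

end SimpleGraph

theorem low_degree_vertex_outside_path_general {V : Type*} [Fintype V] [DecidableEq V]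
    (G : SimpleGraph V) [DecidableRel G.Adj]
    (hEuler : (G.edgeFinset.card : ℤ) ≤ 2 * (Fintype.card V) - 4)
    (hconn : G.Connected)
    {a b : V} (p : G.Walk a b) (hp : p.IsPath)
    (hlen : p.support.length ≤ 3)
    (hproper : ∃ w : V, w ∉ p.support) :
    ∃ v : V, v ∉ p.support ∧ G.degree v ≤ 3 := by
  by_contra! hcon
  obtain ⟨w, hw⟩ := hproper
  set S := p.support.toFinset
  have hS : #S = p.support.length := List.toFinset_card_of_nodup hp.support_nodup
  have hin : 2 * p.length + 1 ≤ ∑ v ∈ S, G.degree v :=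
    hp.isTrail.two_mul_length_add_one_le_sum_degree hconn.preconnected hw
  have hout : #Sᶜ • 4 ≤ ∑ v ∈ Sᶜ, G.degree v :=
    card_nsmul_le_sum _ _ 4 fun v hv => hcon v (by simpa [S] using hv)
  have hsum : ∑ v ∈ S, G.degree v + ∑ v ∈ Sᶜ, G.degree v = 2 * #G.edgeFinset :=
    (sum_add_sum_compl S _).trans G.sum_degrees_eq_twice_card_edges
  have hSc : #Sᶜ = Fintype.card V - #S := card_compl S
  have hSle : #S ≤ Fintype.card V := card_le_univ S
  rw [smul_eq_mul] at hout
  rw [p.length_support] at hS hlen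
  omega

/-- Let `G` be a triangle-free planar graph (so
`e(G) ≤ 2·v(G) − 4` by Euler's formula) with at least 3 vertices, let `P` be a
path in `G` with at most 3 vertices such that `V(P) ≠ V(G)` and `G` is connected.
Then there is a vertex `v ∉ V(P)` of degree at most 3 in `G`. -/
theorem low_degree_vertex_outside_path {V : Type*} [Fintype V] [DecidableEq V]
    (G : SimpleGraph V) [DecidableRel G.Adj]
    (htf : G.CliqueFree 3)
    (hEuler : (G.edgeFinset.card : ℤ) ≤ 2 * (Fintype.card V) - 4)
    (hn : 3 ≤ Fintype.card V)
    (hconn : G.Connected)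
    {a b : V} (p : G.Walk a b) (hp : p.IsPath)
    (hlen : p.support.length ≤ 3)
    (hproper : ∃ w : V, w ∉ p.support) :
    ∃ v : V, v ∉ p.support ∧ G.degree v ≤ 3 :=
  low_degree_vertex_outside_path_general G hEuler hconn p hp hlen hproper
end

section
/- Let G be a graph, let {H_v} be a family of pairwise non-touching induced subgraphs of G (vertex-disjoint with no edges between distinct members), each r-deletable in G, with pairwise disjoint vertex sets. If ψ is a proper L-coloring of G − ∪_v V(H_v) for an r-list-assignment L of G, then ψ extends to a proper L-coloring of G. -/
/-- An induced subgraph on `S` is `r`-deletable in `G` if for every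
list-assignment `L'` with `|L'(v)| ≥ r − (d_G(v) − d_{G[S]}(v))` for `v ∈ S`,
the induced subgraph `G[S]` has a proper `L'`-coloring. -/
def SimpleGraph.Deletable {V : Type*} (G : SimpleGraph V) (S : Set V) (r : ℕ) : Prop :=
  ∀ L : V → Finset ℕ,
    (∀ v ∈ S, r - ((G.neighborSet v).ncard - (G.neighborSet v ∩ S).ncard) ≤ (L v).card) →
    ∃ c : V → ℕ, (∀ v ∈ S, c v ∈ L v) ∧
      ∀ ⦃u w⦄, u ∈ S → w ∈ S → G.Adj u w → c u ≠ c w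

/-!
Because the members of the family do not touch, a vertex of `H_i` has no neighbours in any other
member, so the union of the family is itself `r`-deletable: its lists are exactly those of the
single members, and colourings of the members glue. An `r`-deletable set `S` can then be coloured
over any colouring `ψ` of `G - S`: removing from `L v` the colours of the at most
`d_G(v) - d_{G[S]}(v)` neighbours of `v` outside `S` leaves a list of the size deletability asks for.
-/

namespace SimpleGraph

variable {V : Type*} (G : SimpleGraph V)

noncomputable def outerColors [G.LocallyFinite] (S : Set V) (ψ : V → ℕ) (v : V) : Finset ℕ :=
  ((G.neighborSet v \ S).toFinite.image ψ).toFinset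

lemma mem_outerColors [G.LocallyFinite] {S : Set V} {ψ : V → ℕ} {v w : V}
    (hvw : G.Adj v w) (hw : w ∉ S) : ψ w ∈ G.outerColors S ψ v := by
  simp only [outerColors, Set.Finite.mem_toFinset]
  exact ⟨w, ⟨hvw, hw⟩, rfl⟩

lemma sub_degree_le_card_sdiff_outerColors [G.LocallyFinite] (S : Set V) (ψ : V → ℕ)
    (L : V → Finset ℕ) {r : ℕ} (v : V) (hL : r ≤ (L v).card) :
    r - ((G.neighborSet v).ncard - (G.neighborSet v ∩ S).ncard)
      ≤ (L v \ G.outerColors S ψ v).card := by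
  have h_split : (G.neighborSet v ∩ S).ncard + (G.neighborSet v \ S).ncard
      = (G.neighborSet v).ncard :=
    Set.ncard_inter_add_ncard_sdiff_eq_ncard _ _ (Set.toFinite _)
  have h_outer : (G.outerColors S ψ v).card ≤ (G.neighborSet v \ S).ncard := by
    rw [outerColors, ← Set.ncard_eq_toFinset_card _]
    exact Set.ncard_image_le (Set.toFinite _)
  have h_sdiff := Finset.le_card_sdiff (G.outerColors S ψ v) (L v)
  omega

variable {G}

lemma Deletable.extend_coloring [G.LocallyFinite] {S : Set V} {r : ℕ} (hS : G.Deletable S r)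
    (L : V → Finset ℕ) (hL : ∀ v ∈ S, r ≤ (L v).card) (ψ : V → ℕ)
    (hψmem : ∀ v ∉ S, ψ v ∈ L v)
    (hψproper : ∀ ⦃u w⦄, u ∉ S → w ∉ S → G.Adj u w → ψ u ≠ ψ w) :
    ∃ c : V → ℕ, (∀ v ∉ S, c v = ψ v) ∧ (∀ v, c v ∈ L v) ∧
      ∀ ⦃u w⦄, G.Adj u w → c u ≠ c w := by
  classical
  obtain ⟨c, hc_mem, hc_proper⟩ := hS (fun v => L v \ G.outerColors S ψ v)
    fun v hv => G.sub_degree_le_card_sdiff_outerColors S ψ L v (hL v hv)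
  have hc_outer : ∀ ⦃u w⦄, u ∈ S → w ∉ S → G.Adj u w → c u ≠ ψ w := fun u w hu hw huw h =>
    (Finset.mem_sdiff.mp (hc_mem u hu)).2 (h ▸ G.mem_outerColors huw hw)
  refine ⟨S.piecewise c ψ, fun v hv => S.piecewise_eq_of_notMem c ψ hv, fun v => ?_,
    fun u w huw => ?_⟩
  · by_cases hv : v ∈ S
    · simpa [hv] using (Finset.mem_sdiff.mp (hc_mem v hv)).1
    · simpa [hv] using hψmem v hv
  · by_cases hu : u ∈ S <;> by_cases hw : w ∈ S <;>
      simp only [Set.piecewise, hu, hw, if_true, if_false]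
    · exact hc_proper hu hw huw
    · exact hc_outer hu hw huw
    · exact (hc_outer hw hu huw.symm).symm
    · exact hψproper hu hw huw

variable {ι : Type*}

variable (G) in
def PairwiseNonTouching (S : ι → Set V) : Prop :=
  ∀ i j, i ≠ j → ∀ a ∈ S i, ∀ b ∈ S j, ¬ G.Adj a b

variable {S : ι → Set V}

lemma PairwiseNonTouching.neighborSet_inter_iUnion (hnotouch : G.PairwiseNonTouching S) {i : ι}
    {v : V} (hv : v ∈ S i) :
    G.neighborSet v ∩ ⋃ j, S j = G.neighborSet v ∩ S i := by
  refine Set.Subset.antisymm (fun w ⟨hvw, hw⟩ => ⟨hvw, ?_⟩)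
    (Set.inter_subset_inter_right _ (Set.subset_iUnion S i))
  obtain ⟨j, hwj⟩ := Set.mem_iUnion.mp hw
  obtain rfl | hij := eq_or_ne i j
  · exact hwj
  · exact absurd hvw (hnotouch i j hij v hv w hwj)

lemma Deletable.iUnion {r : ℕ} (hnotouch : G.PairwiseNonTouching S)
    (hdel : ∀ i, G.Deletable (S i) r) : G.Deletable (⋃ i, S i) r := by
  classical
  intro L hL
  have hL_i : ∀ i, ∀ v ∈ S i,
      r - ((G.neighborSet v).ncard - (G.neighborSet v ∩ S i).ncard) ≤ (L v).card := by
    intro i v hv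
    rw [← hnotouch.neighborSet_inter_iUnion hv]
    exact hL v (Set.mem_iUnion_of_mem i hv)
  choose col hcol_mem hcol_proper using fun i => hdel i L (hL_i i)
  let c : V → ℕ := fun v => if h : ∃ i, v ∈ S i then col h.choose v else 0
  have hc : ∀ v (h : ∃ i, v ∈ S i), c v = col h.choose v := fun v h => dif_pos h
  refine ⟨c, fun v hv => ?_, fun u w hu hw huw => ?_⟩
  · have h := Set.mem_iUnion.mp hv
    exact hc v h ▸ hcol_mem _ v h.choose_spec
  · have hu := Set.mem_iUnion.mp hu
    have hw := Set.mem_iUnion.mp hw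
    rw [hc u hu, hc w hw]
    obtain hij | hij := eq_or_ne hu.choose hw.choose
    · rw [hij]
      exact hcol_proper _ (hij ▸ hu.choose_spec) hw.choose_spec huw
    · exact absurd huw (hnotouch _ _ hij u hu.choose_spec w hw.choose_spec)

end SimpleGraph

theorem extend_coloring_over_deletable_family_general {V : Type*} [Fintype V]
    (G : SimpleGraph V) (r : ℕ) {ι : Type*} (S : ι → Set V)
    (hnotouch : ∀ i j, i ≠ j → ∀ a ∈ S i, ∀ b ∈ S j, ¬ G.Adj a b)
    (hdel : ∀ i, G.Deletable (S i) r)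
    (L : V → Finset ℕ) (hL : ∀ v, r ≤ (L v).card)
    (ψ : V → ℕ)
    (hψmem : ∀ v, v ∉ (⋃ i, S i) → ψ v ∈ L v)
    (hψproper : ∀ ⦃u w⦄, u ∉ (⋃ i, S i) → w ∉ (⋃ i, S i) → G.Adj u w → ψ u ≠ ψ w) :
    ∃ c : V → ℕ, (∀ v, v ∉ (⋃ i, S i) → c v = ψ v) ∧ (∀ v, c v ∈ L v) ∧
      ∀ ⦃u w⦄, G.Adj u w → c u ≠ c w := by
  classical
  exact (SimpleGraph.Deletable.iUnion hnotouch hdel).extend_coloring L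
    (fun v _ => hL v) ψ hψmem hψproper

/-- Let `{H_i}` be a family of pairwise non-touching induced
subgraphs of `G` (vertex-disjoint, no edges between distinct members), each
`r`-deletable in `G`. If `ψ` is a proper `L`-coloring of `G − ⋃ᵢ V(Hᵢ)` for an
`r`-list-assignment `L` of `G`, then `ψ` extends to a proper `L`-coloring of `G`. -/
theorem extend_coloring_over_deletable_family {V : Type*} [Fintype V]
    (G : SimpleGraph V) (r : ℕ) {ι : Type*} (S : ι → Set V)
    (hdisj : ∀ i j, i ≠ j → Disjoint (S i) (S j))
    (hnotouch : ∀ i j, i ≠ j → ∀ a ∈ S i, ∀ b ∈ S j, ¬ G.Adj a b)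
    (hdel : ∀ i, G.Deletable (S i) r)
    (L : V → Finset ℕ) (hL : ∀ v, r ≤ (L v).card)
    (ψ : V → ℕ)
    (hψmem : ∀ v, v ∉ (⋃ i, S i) → ψ v ∈ L v)
    (hψproper : ∀ ⦃u w⦄, u ∉ (⋃ i, S i) → w ∉ (⋃ i, S i) → G.Adj u w → ψ u ≠ ψ w) :
    ∃ c : V → ℕ, (∀ v, v ∉ (⋃ i, S i) → c v = ψ v) ∧ (∀ v, c v ∈ L v) ∧
      ∀ ⦃u w⦄, G.Adj u w → c u ≠ c w :=
  extend_coloring_over_deletable_family_general G r S hnotouch hdel L hL ψ hψmem hψproper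
end
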